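/- Define g(t) = ta + log(b − a·e^{t(b−a)}) − log(b − a) for real a < 0 < b. Then g(0) = 0, g′(0) = 0, and g″(t) ≤ (b − a)²/4 for all t. -/

import Mathlib

/-!
With `c = b - a` and `p(t) = -a e^{tc} / (b - a e^{tc})`, one has `g' = a + c p` and
`p' = c p (1 - p)`, so `g'' = c² p (1 - p) ≤ c² / 4` because `p (1 - p) ≤ 1/4` for every real `p`.
-/

open Real

noncomputable def tiltWeight (a b c t : ℝ) : ℝ :=
  -a * exp (t * c) / (b - a * exp (t * c))

lemma sub_mul_exp_pos {a b : ℝ} (ha : a ≤ 0) (hb : 0 < b) (s : ℝ) : 0 < b - a * exp s := by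
  nlinarith [exp_pos s]

lemma hasDerivAt_exp_mul_const (t c : ℝ) : HasDerivAt (fun s => exp (s * c)) (exp (t * c) * c) t := by
  simpa using ((hasDerivAt_id t).mul_const c).exp

section
variable {a b c t : ℝ}

lemma hasDerivAt_log_sub_mul_exp (hD : b - a * exp (t * c) ≠ 0) :
    HasDerivAt (fun s => log (b - a * exp (s * c))) (c * tiltWeight a b c t) t := by
  refine ((((hasDerivAt_exp_mul_const t c).const_mul a).const_sub b).log hD).congr_deriv ?_
  unfold tiltWeight
  ring

lemma hasDerivAt_tiltWeight (hD : b - a * exp (t * c) ≠ 0) :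
    HasDerivAt (tiltWeight a b c) (c * (tiltWeight a b c t * (1 - tiltWeight a b c t))) t := by
  have hE := hasDerivAt_exp_mul_const t c
  refine ((hE.const_mul (-a)).div ((hE.const_mul a).const_sub b) hD).congr_deriv ?_
  unfold tiltWeight
  field_simp
  ring

end

lemma mul_one_sub_le_quarter (p : ℝ) : p * (1 - p) ≤ 1 / 4 := by
  nlinarith [sq_nonneg (p - 1 / 2)]

theorem stmt_6 (a b : ℝ) (ha : a < 0) (hb : 0 < b) :
    let g : ℝ → ℝ := fun t =>
      t * a + Real.log (b - a * Real.exp (t * (b - a))) - Real.log (b - a)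
    g 0 = 0 ∧ deriv g 0 = 0 ∧ ∀ t : ℝ, deriv (deriv g) t ≤ (b - a) ^ 2 / 4 := by
  intro g
  set p := tiltWeight a b (b - a)
  have hD (t : ℝ) : b - a * exp (t * (b - a)) ≠ 0 := (sub_mul_exp_pos ha.le hb _).ne'
  have hg' : deriv g = fun t => a + (b - a) * p t := funext fun t =>
    ((((hasDerivAt_id t).mul_const a).add (hasDerivAt_log_sub_mul_exp (hD t))).sub_const _).deriv.trans
      (by rw [one_mul])
  refine ⟨by simp [g], ?_, fun t => ?_⟩
  · have hc : b - a ≠ 0 := by linarith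
    rw [hg']
    simp only [p, tiltWeight, zero_mul, exp_zero, mul_one]
    field_simp
    ring
  · rw [hg', (((hasDerivAt_tiltWeight (hD t)).const_mul (b - a)).const_add a).deriv]
    calc (b - a) * ((b - a) * (p t * (1 - p t))) = (b - a) ^ 2 * (p t * (1 - p t)) := by ring
      _ ≤ (b - a) ^ 2 * (1 / 4) := by gcongr; exact mul_one_sub_le_quarter _
      _ = (b - a) ^ 2 / 4 := by ring
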